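/- (Theorem 3.1, circular case, first system.) For every u in the open interval (1/√3, √3), every complex eigenvalue of the 4×4 real matrix J·B₂(u) has nonzero real part; hence the matrix J·B₂(u) is hyperbolic. -/

import Mathlib

/-!
The characteristic polynomial of `J·B₂(u)` is the biquadratic `λ⁴ + (4 - φ₁ - φ₂) λ² + φ₁ φ₂`.
A root `λ = i y` would make `y²` a real root of `t² - (4 - φ₁ - φ₂) t + φ₁ φ₂`, so it suffices
that this quadratic has negative discriminant. Writing `φ₁ = 1 + c (2 - u²)` and
`φ₂ = 1 + c (2u² - 1)`, the discriminant is `c (9 c (1 - u²)² - 8 (1 + u²))`. Eliminating `α`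
and `μ` gives `c = 8u (m + 1)(m u² + 1) / ((8 m u + m² s + u s) s⁴)` with `s = √(1 + u²)`, so
`c > 0`, and `9 c (1 - u²)² < 8 (1 + u²)` becomes a polynomial inequality in `u` and `m`. Viewed
as a quadratic in `m` it holds because `m ≥ 1` when `u ≤ 1` and `m ≤ 1` when `u ≥ 1`.
-/

noncomputable def mParam (u : ℝ) : ℝ :=
  (8 * u ^ 3 - u ^ 3 * (1 + u ^ 2) ^ ((3 : ℝ) / 2)) /
    (8 * u ^ 3 - (1 + u ^ 2) ^ ((3 : ℝ) / 2))

noncomputable def alphaParam (u : ℝ) : ℝ :=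
  Real.sqrt (2 * mParam u * u ^ 2 + 2)

noncomputable def muParam (u : ℝ) : ℝ :=
  4 * mParam u * alphaParam u / Real.sqrt (1 + u ^ 2) +
    alphaParam u * (mParam u) ^ 2 / (2 * u) + alphaParam u / 2

noncomputable def phi1 (u : ℝ) : ℝ :=
  1 + 2 * (mParam u + 1) * (alphaParam u) ^ 3 * (2 - u ^ 2) /
    (muParam u * (1 + u ^ 2) ^ ((5 : ℝ) / 2))

noncomputable def phi2 (u : ℝ) : ℝ :=
  1 + 2 * (mParam u + 1) * (alphaParam u) ^ 3 * (2 * u ^ 2 - 1) /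
    (muParam u * (1 + u ^ 2) ^ ((5 : ℝ) / 2))

noncomputable def psi1 (u : ℝ) : ℝ :=
  1 + (4 * alphaParam u / muParam u) *
    ((2 * (mParam u) ^ 2 * u ^ 4 + (6 * mParam u - (mParam u) ^ 2 - 1) * u ^ 2 + 2) /
        (1 + u ^ 2) ^ ((5 : ℝ) / 2) -
      mParam u * u ^ 2 / 8 - mParam u / (8 * u ^ 3))

noncomputable def psi2 (u : ℝ) : ℝ :=
  1 + (4 * alphaParam u / muParam u) *
    ((-(mParam u) ^ 2 * u ^ 4 + (2 * (mParam u) ^ 2 - 6 * mParam u + 2) * u ^ 2 - 1) /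
        (1 + u ^ 2) ^ ((5 : ℝ) / 2) +
      mParam u * u ^ 2 / 4 + mParam u / (4 * u ^ 3))

def Jstd : Matrix (Fin 4) (Fin 4) ℝ :=
  !![0, 0, -1, 0; 0, 0, 0, -1; 1, 0, 0, 0; 0, 1, 0, 0]

noncomputable def B2mat (u : ℝ) : Matrix (Fin 4) (Fin 4) ℝ :=
  !![1, 0, 0, 1; 0, 1, -1, 0; 0, -1, 1 - phi1 u, 0; 1, 0, 0, 1 - phi2 u]

theorem Complex.re_ne_zero_of_biquadratic_root {a b : ℝ} (hdisc : a ^ 2 - 4 * b < 0) {z : ℂ}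
    (hz : z ^ 4 + a * z ^ 2 + b = 0) : z.re ≠ 0 := by
  intro hre
  have hz2 : z ^ 2 = ((-z.im ^ 2 : ℝ) : ℂ) := by
    rw [← Complex.re_add_im z, hre]
    push_cast
    ring_nf
    simp [Complex.I_sq]
  rw [show z ^ 4 = (z ^ 2) ^ 2 by ring, hz2] at hz
  have hy : (-z.im ^ 2) ^ 2 + a * (-z.im ^ 2) + b = 0 := by exact_mod_cast hz
  nlinarith [sq_nonneg (2 * z.im ^ 2 - a)]

lemma quadratic_pos_of_one_le {A B C m : ℝ} (hA : 0 ≤ A) (hB : 0 ≤ B) (h1 : 0 < A + B + C)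
    (hm : 1 ≤ m) : 0 < A * m ^ 2 + B * m + C := by
  nlinarith [mul_nonneg hA (by nlinarith : (0 : ℝ) ≤ m ^ 2 - 1), mul_nonneg hB (sub_nonneg.2 hm)]

lemma quadratic_pos_of_le_one {A B C m : ℝ} (hB : 0 ≤ B) (hAB : 0 ≤ A + B) (hC : 0 < C)
    (hm0 : 0 ≤ m) (hm1 : m ≤ 1) : 0 < A * m ^ 2 + B * m + C := by
  rcases le_total 0 A with hA | hA
  · nlinarith [mul_nonneg hA (sq_nonneg m), mul_nonneg hB hm0]
  · nlinarith [mul_nonneg (neg_nonneg.2 hA) (mul_nonneg hm0 (sub_nonneg.2 hm1)),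
      mul_nonneg hAB hm0]

open Polynomial in
theorem charpoly_Jstd_mul_B2mat (u : ℝ) :
    (Jstd * B2mat u).charpoly = X ^ 4 + C (4 - phi1 u - phi2 u) * X ^ 2 + C (phi1 u * phi2 u) := by
  simp [Matrix.charpoly, Matrix.charmatrix, Jstd, B2mat, Matrix.det_succ_row_zero,
    Fin.sum_univ_succ, Matrix.submatrix, Fin.succAbove]
  simp only [map_ofNat]
  ring

noncomputable def phiCoeff (u : ℝ) : ℝ :=
  2 * (mParam u + 1) * alphaParam u ^ 3 / (muParam u * (1 + u ^ 2) ^ ((5 : ℝ) / 2))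

lemma phi1_eq (u : ℝ) : phi1 u = 1 + phiCoeff u * (2 - u ^ 2) := by
  rw [phi1, phiCoeff, div_mul_eq_mul_div, mul_right_comm]

lemma phi2_eq (u : ℝ) : phi2 u = 1 + phiCoeff u * (2 * u ^ 2 - 1) := by
  rw [phi2, phiCoeff, div_mul_eq_mul_div, mul_right_comm]

lemma discrim_phi (u : ℝ) :
    (4 - phi1 u - phi2 u) ^ 2 - 4 * (phi1 u * phi2 u) =
      phiCoeff u * (9 * phiCoeff u * (1 - u ^ 2) ^ 2 - 8 * (1 + u ^ 2)) := by
  rw [phi1_eq, phi2_eq]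
  ring

section Polynomials

variable {u : ℝ}

lemma quadCoeff_linear_pos (h3u2 : 1 < 3 * u ^ 2) (hu23 : u ^ 2 < 3) :
    0 < 8 * (1 + u ^ 2) ^ 2 - 9 * (1 - u ^ 2) ^ 2 := by
  nlinarith

lemma quadCoeff_leading_pos_of_le_one (hu0 : 0 < u) (h3u2 : 1 < 3 * u ^ 2) (hu1 : u ≤ 1) :
    0 < (1 + u ^ 2) ^ 3 - 9 * u ^ 3 * (1 - u ^ 2) ^ 2 := by
  nlinarith [mul_nonneg (mul_nonneg (mul_nonneg (sub_nonneg.2 hu1) hu0.le) hu0.le)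
      (sq_nonneg (1 - u ^ 2)),
    mul_nonneg (mul_nonneg (sub_nonneg.2 hu1) hu0.le) (sq_nonneg (1 - u ^ 2)),
    mul_pos (mul_pos hu0 hu0) hu0]

lemma quadCoeff_sum_pos_of_le_one (hu0 : 0 < u) (h3u2 : 1 < 3 * u ^ 2) (hu1 : u ≤ 1) :
    0 < (1 + u ^ 2) ^ 2 * (1 + 9 * u) - 18 * u * (1 - u ^ 2) ^ 2 := by
  nlinarith [mul_nonneg (mul_nonneg (sub_nonneg.2 hu1) hu0.le) (sq_nonneg (1 - u ^ 2)),
    mul_pos hu0 hu0, mul_pos (mul_pos hu0 hu0) hu0]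

lemma quadCoeff_const_pos_of_one_le (hu1 : 1 ≤ u) : 0 < (1 + u ^ 2) ^ 3 - 9 * (1 - u ^ 2) ^ 2 := by
  nlinarith [sq_nonneg (u ^ 2 - 1), sq_nonneg u]

lemma quadCoeff_leading_add_linear_nonneg_of_one_le (hu1 : 1 ≤ u) (hu23 : u ^ 2 < 3) :
    0 ≤ (1 + u ^ 2) ^ 3 * (1 + 8 * u) - 9 * u * (1 - u ^ 2) ^ 2 * (2 * u ^ 2 + 1) := by
  have hu0 : (0 : ℝ) ≤ u := by linarith
  nlinarith [mul_nonneg (mul_nonneg (sub_nonneg.2 hu23.le) hu0) (sq_nonneg (u ^ 2 - 1)),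
    mul_nonneg (sub_nonneg.2 hu23.le) (sq_nonneg (u ^ 2 - 1)), mul_nonneg (sub_nonneg.2 hu1) hu0]

lemma rhombus_poly_pos {m : ℝ} (hu0 : 0 < u) (h3u2 : 1 < 3 * u ^ 2) (hu23 : u ^ 2 < 3)
    (hm : 0 < m) (hm_ge : u ≤ 1 → 1 ≤ m) (hm_le : 1 ≤ u → m ≤ 1) :
    9 * u * (m + 1) * (m * u ^ 2 + 1) * (1 - u ^ 2) ^ 2 <
      (1 + u ^ 2) ^ 3 * (m ^ 2 + 8 * u * m + u) := by
  have hB : 0 < u * (1 + u ^ 2) * (8 * (1 + u ^ 2) ^ 2 - 9 * (1 - u ^ 2) ^ 2) := by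
    have := quadCoeff_linear_pos h3u2 hu23
    positivity
  -- a quadratic `A m ^ 2 + B m + C` in `m`, whose sign is controlled on each side of `u = 1`
  suffices 0 < ((1 + u ^ 2) ^ 3 - 9 * u ^ 3 * (1 - u ^ 2) ^ 2) * m ^ 2 +
      u * (1 + u ^ 2) * (8 * (1 + u ^ 2) ^ 2 - 9 * (1 - u ^ 2) ^ 2) * m +
      u * ((1 + u ^ 2) ^ 3 - 9 * (1 - u ^ 2) ^ 2) by linarith
  rcases le_total u 1 with hu1 | hu1
  · refine quadratic_pos_of_one_le ?_ hB.le ?_ (hm_ge hu1)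
    · exact (quadCoeff_leading_pos_of_le_one hu0 h3u2 hu1).le
    · nlinarith [quadCoeff_sum_pos_of_le_one hu0 h3u2 hu1]
  · refine quadratic_pos_of_le_one hB.le ?_ ?_ hm.le (hm_le hu1)
    · nlinarith [quadCoeff_leading_add_linear_nonneg_of_one_le hu1 hu23]
    · nlinarith [quadCoeff_const_pos_of_one_le hu1]

end Polynomials

section Parameters

variable {u : ℝ}

lemma bounds_of_mem_Ioo (hu1 : 1 / √3 < u) (hu2 : u < √3) :
    0 < u ∧ 1 < 3 * u ^ 2 ∧ u ^ 2 < 3 := by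
  have hu0 : 0 < u := lt_trans (by positivity) hu1
  rw [one_div, ← Real.sqrt_inv, Real.sqrt_lt' hu0] at hu1
  rw [Real.lt_sqrt hu0.le] at hu2
  exact ⟨hu0, by linarith, hu2⟩

lemma one_add_sq_rpow_div_two (u : ℝ) (n : ℕ) :
    (1 + u ^ 2) ^ ((n : ℝ) / 2) = √(1 + u ^ 2) ^ n := by
  rw [Real.rpow_div_two_eq_sqrt _ (by positivity), Real.rpow_natCast]

lemma mParam_eq (u : ℝ) :
    mParam u = (8 * u ^ 3 - u ^ 3 * √(1 + u ^ 2) ^ 3) / (8 * u ^ 3 - √(1 + u ^ 2) ^ 3) := by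
  rw [mParam, ← one_add_sq_rpow_div_two]
  norm_num

lemma cube_sqrt_one_add_sq_lt (hu0 : 0 < u) (h3u2 : 1 < 3 * u ^ 2) :
    √(1 + u ^ 2) ^ 3 < 8 * u ^ 3 := by
  have : √(1 + u ^ 2) < 2 * u := by
    rw [Real.sqrt_lt' (by positivity)]
    linarith
  calc √(1 + u ^ 2) ^ 3 < (2 * u) ^ 3 := by gcongr
    _ = 8 * u ^ 3 := by ring

lemma mParam_pos (hu0 : 0 < u) (h3u2 : 1 < 3 * u ^ 2) (hu23 : u ^ 2 < 3) : 0 < mParam u := by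
  have hs : √(1 + u ^ 2) < 2 := by
    rw [Real.sqrt_lt' two_pos]
    linarith
  have hs3 : √(1 + u ^ 2) ^ 3 < 2 ^ 3 := by gcongr
  rw [mParam_eq]
  apply div_pos
  · nlinarith [pow_pos hu0 3]
  · linarith [cube_sqrt_one_add_sq_lt hu0 h3u2]

lemma mParam_sub_one_eq (hu0 : 0 < u) (h3u2 : 1 < 3 * u ^ 2) :
    mParam u - 1 = √(1 + u ^ 2) ^ 3 * (1 - u ^ 3) / (8 * u ^ 3 - √(1 + u ^ 2) ^ 3) := by
  have := cube_sqrt_one_add_sq_lt hu0 h3u2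
  rw [mParam_eq]
  field_simp [show 8 * u ^ 3 - √(1 + u ^ 2) ^ 3 ≠ 0 by linarith]
  ring

lemma one_le_mParam (hu0 : 0 < u) (h3u2 : 1 < 3 * u ^ 2) (hu1 : u ≤ 1) : 1 ≤ mParam u := by
  have := cube_sqrt_one_add_sq_lt hu0 h3u2
  have hu3 : u ^ 3 ≤ 1 := pow_le_one₀ hu0.le hu1
  have : 0 ≤ mParam u - 1 := by
    rw [mParam_sub_one_eq hu0 h3u2]
    exact div_nonneg (mul_nonneg (by positivity) (by linarith)) (by linarith)
  linarith

lemma mParam_le_one (hu0 : 0 < u) (h3u2 : 1 < 3 * u ^ 2) (hu1 : 1 ≤ u) : mParam u ≤ 1 := by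
  have := cube_sqrt_one_add_sq_lt hu0 h3u2
  have hu3 : 1 ≤ u ^ 3 := one_le_pow₀ hu1
  have : mParam u - 1 ≤ 0 := by
    rw [mParam_sub_one_eq hu0 h3u2]
    exact div_nonpos_of_nonpos_of_nonneg
      (mul_nonpos_of_nonneg_of_nonpos (by positivity) (by linarith)) (by linarith)
  linarith

lemma phiCoeff_eq (hu0 : 0 < u) (hm : 0 < mParam u) :
    phiCoeff u = 8 * u * (mParam u + 1) * (mParam u * u ^ 2 + 1) /
      ((8 * mParam u * u + mParam u ^ 2 * √(1 + u ^ 2) + u * √(1 + u ^ 2)) *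
        √(1 + u ^ 2) ^ 4) := by
  have hα2 : alphaParam u ^ 2 = 2 * mParam u * u ^ 2 + 2 := Real.sq_sqrt (by positivity)
  have h52 : (1 + u ^ 2) ^ ((5 : ℝ) / 2) = √(1 + u ^ 2) ^ 5 := by
    exact_mod_cast one_add_sq_rpow_div_two u 5
  rw [phiCoeff, muParam, h52]
  field_simp
  rw [hα2]
  ring

lemma nine_mul_phiCoeff_mul_lt (hu0 : 0 < u) (h3u2 : 1 < 3 * u ^ 2) (hu23 : u ^ 2 < 3) :
    9 * phiCoeff u * (1 - u ^ 2) ^ 2 < 8 * (1 + u ^ 2) := by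
  have hm := mParam_pos hu0 h3u2 hu23
  have hpoly := rhombus_poly_pos hu0 h3u2 hu23 hm (one_le_mParam hu0 h3u2) (mParam_le_one hu0 h3u2)
  rw [phiCoeff_eq hu0 hm, mul_div_assoc', div_mul_eq_mul_div, div_lt_iff₀ (by positivity)]
  set m := mParam u
  set s := √(1 + u ^ 2)
  have hs1 : 1 ≤ s := Real.one_le_sqrt.mpr (by nlinarith)
  have hs4 : s ^ 4 = (1 + u ^ 2) ^ 2 := by
    rw [show s ^ 4 = (s ^ 2) ^ 2 by ring, Real.sq_sqrt (by positivity)]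
  calc 9 * (8 * u * (m + 1) * (m * u ^ 2 + 1)) * (1 - u ^ 2) ^ 2
      = 8 * (9 * u * (m + 1) * (m * u ^ 2 + 1) * (1 - u ^ 2) ^ 2) := by ring
    _ < 8 * ((1 + u ^ 2) ^ 3 * (m ^ 2 + 8 * u * m + u)) := by gcongr
    _ ≤ 8 * ((1 + u ^ 2) ^ 3 * (8 * m * u + m ^ 2 * s + u * s)) := by
      gcongr 8 * (_ * ?_)
      nlinarith [mul_le_mul_of_nonneg_left hs1 (sq_nonneg m),
        mul_le_mul_of_nonneg_left hs1 hu0.le]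
    _ = 8 * (1 + u ^ 2) * ((8 * m * u + m ^ 2 * s + u * s) * s ^ 4) := by rw [hs4]; ring

lemma discrim_phi_neg (hu0 : 0 < u) (h3u2 : 1 < 3 * u ^ 2) (hu23 : u ^ 2 < 3) :
    (4 - phi1 u - phi2 u) ^ 2 - 4 * (phi1 u * phi2 u) < 0 := by
  have hm := mParam_pos hu0 h3u2 hu23
  have hc : 0 < phiCoeff u := by rw [phiCoeff_eq hu0 hm]; positivity
  rw [discrim_phi]
  exact mul_neg_of_pos_of_neg hc (by linarith [nine_mul_phiCoeff_mul_lt hu0 h3u2 hu23])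

end Parameters

/-- Every complex eigenvalue of `J·B₂(u)` has nonzero real part: the matrix is
hyperbolic. -/
theorem JB2_hyperbolic (u : ℝ) (hu1 : 1 / Real.sqrt 3 < u) (hu2 : u < Real.sqrt 3)
    (lam : ℂ) (hlam : lam ∈ spectrum ℂ ((Jstd * B2mat u).map (Complex.ofReal))) :
    lam.re ≠ 0 := by
  obtain ⟨hu0, h3u2, hu23⟩ := bounds_of_mem_Ioo hu1 hu2
  rw [Matrix.mem_spectrum_iff_isRoot_charpoly, show Complex.ofReal = ⇑Complex.ofRealHom from rfl,
    Matrix.charpoly_map, charpoly_Jstd_mul_B2mat] at hlam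
  exact Complex.re_ne_zero_of_biquadratic_root (discrim_phi_neg hu0 h3u2 hu23) (by simpa using hlam)
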